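/- Let k ≥ 1 and let 0 < λ₁⁰ < ... < λ_k⁰ < 1 with Δ = min gap between consecutive λ_j⁰ (including to the endpoints if needed). Let 0 < λ₁ < ... < λ_k < 1 satisfy max_j |λ_j − λ_j⁰| > Δ/4. Then there exists a pair (i, j) such that the overlap lengths a = |[λ_{i-1}, λ_i] ∩ [λ_{j-1}⁰, λ_j⁰]| and b = |[λ_{i-1}, λ_i] ∩ [λ_j⁰, λ_{j+1}⁰]| satisfy a ≥ Δ/4, b ≥ Δ/4 (where segment boundaries use λ₀ = λ₀⁰ = 0 and λ_{k+1} = λ_{k+1}⁰ = 1). -/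
import Mathlib


open MeasureTheory

lemma overlap_helper (a b c d r : ℝ) (hr : 0 ≤ r)
    (h : max a c + r ≤ min b d) :
    r ≤ (volume (Set.Icc a b ∩ Set.Icc c d)).toReal := by
  rw [Set.Icc_inter_Icc, Real.volume_Icc, ENNReal.toReal_ofReal (by linarith)]
  linarith

theorem far_configuration_double_overlap (k : ℕ) (hk : 1 ≤ k)
    (lam0 lam : ℕ → ℝ) (Δ : ℝ) (hΔpos : 0 < Δ)
    (h00 : lam0 0 = 0) (h01 : lam0 (k + 1) = 1)
    (h0mono : ∀ j < k + 1, lam0 j < lam0 (j + 1))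
    (hl0 : lam 0 = 0) (hl1 : lam (k + 1) = 1)
    (hlmono : ∀ j < k + 1, lam j < lam (j + 1))
    (hΔ : ∀ j ∈ Finset.Icc 1 (k + 1), Δ ≤ lam0 j - lam0 (j - 1))
    (hfar : ∃ j ∈ Finset.Icc 1 k, |lam j - lam0 j| > Δ / 4) :
    ∃ i ∈ Finset.Icc 1 (k + 1), ∃ j ∈ Finset.Icc 1 k,
      Δ / 4 ≤ (volume (Set.Icc (lam (i - 1)) (lam i) ∩
          Set.Icc (lam0 (j - 1)) (lam0 j))).toReal ∧
      Δ / 4 ≤ (volume (Set.Icc (lam (i - 1)) (lam i) ∩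
          Set.Icc (lam0 j) (lam0 (j + 1)))).toReal := by
  classical
  obtain ⟨j0, hj0mem, hj0⟩ := hfar
  rw [Finset.mem_Icc] at hj0mem
  obtain ⟨hj01, hj0k⟩ := hj0mem
  rcases lt_abs.mp hj0 with hA | hB
  · -- lam j0 > lam0 j0 + Δ/4
    have hex : ∃ s, s ≤ j0 ∧ lam (j0 - s) < lam0 (j0 - s) + Δ / 4 :=
      ⟨j0, le_rfl, by simp [hl0, h00]; linarith⟩
    set s := Nat.find hex with hs
    obtain ⟨hsle, hPs⟩ : s ≤ j0 ∧ lam (j0 - s) < lam0 (j0 - s) + Δ / 4 := Nat.find_spec hex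
    have hs0 : s ≠ 0 := by
      intro h
      rw [h] at hPs
      simp only [Nat.sub_zero] at hPs
      linarith
    obtain ⟨u, hu⟩ := Nat.exists_eq_succ_of_ne_zero hs0
    set t := j0 - s with htdef
    have htj0 : t + 1 ≤ j0 := by omega
    have hnot : ¬ (u ≤ j0 ∧ lam (j0 - u) < lam0 (j0 - u) + Δ / 4) :=
      Nat.find_min hex (by omega)
    have hju : j0 - u = t + 1 := by omega
    have ht2 : lam0 (t + 1) + Δ / 4 ≤ lam (t + 1) := by
      rcases not_and_or.mp hnot with h | h
      · omega
      · rw [hju] at h; linarith [not_lt.mp h]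
    have gap1 : Δ ≤ lam0 (t + 1) - lam0 t := by
      have := hΔ (t + 1) (by rw [Finset.mem_Icc]; omega)
      simpa using this
    have gap2 : Δ ≤ lam0 (t + 2) - lam0 (t + 1) := by
      have := hΔ (t + 2) (by rw [Finset.mem_Icc]; omega)
      simpa using this
    refine ⟨t + 1, by rw [Finset.mem_Icc]; omega, t + 1, by rw [Finset.mem_Icc]; omega, ?_, ?_⟩
    · simp only [show t + 1 - 1 = t from rfl]
      apply overlap_helper _ _ _ _ _ (by linarith)
      have h1 : max (lam t) (lam0 t) ≤ lam0 t + Δ / 4 :=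
        max_le (le_of_lt hPs) (by linarith)
      have h2 : lam0 t + Δ ≤ min (lam (t + 1)) (lam0 (t + 1)) :=
        le_min (by linarith) (by linarith)
      linarith
    · simp only [show t + 1 - 1 = t from rfl]
      apply overlap_helper _ _ _ _ _ (by linarith)
      have h1 : max (lam t) (lam0 (t + 1)) ≤ lam0 (t + 1) :=
        max_le (by linarith) le_rfl
      have h2 : lam0 (t + 1) + Δ / 4 ≤ min (lam (t + 1)) (lam0 (t + 1 + 1)) :=
        le_min (by linarith) (by linarith)
      linarith
  · -- lam j0 < lam0 j0 - Δ/4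
    have hB' : lam j0 < lam0 j0 - Δ / 4 := by linarith
    have hex : ∃ t, j0 < t ∧ lam0 t - Δ / 4 ≤ lam t :=
      ⟨k + 1, by omega, by rw [h01, hl1]; linarith⟩
    set t := Nat.find hex with hts
    obtain ⟨htgt, hPt⟩ : j0 < t ∧ lam0 t - Δ / 4 ≤ lam t := Nat.find_spec hex
    have htle : t ≤ k + 1 := Nat.find_min' hex ⟨by omega, by rw [h01, hl1]; linarith⟩
    obtain ⟨u, hu⟩ : ∃ u, t = u + 2 := ⟨t - 2, by omega⟩
    have hleft : lam (u + 1) < lam0 (u + 1) - Δ / 4 := by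
      rcases eq_or_lt_of_le (show j0 ≤ u + 1 by omega) with h | h
      · rw [← h]; linarith
      · have hnot : ¬ (j0 < u + 1 ∧ lam0 (u + 1) - Δ / 4 ≤ lam (u + 1)) :=
          Nat.find_min hex (by omega)
        rcases not_and_or.mp hnot with h' | h'
        · omega
        · linarith [not_le.mp h']
    rw [hu] at hPt
    have gap1 : Δ ≤ lam0 (u + 1) - lam0 u := by
      have := hΔ (u + 1) (by rw [Finset.mem_Icc]; omega)
      simpa using this
    have gap2 : Δ ≤ lam0 (u + 2) - lam0 (u + 1) := by
      have := hΔ (u + 2) (by rw [Finset.mem_Icc]; omega)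
      simpa using this
    refine ⟨u + 2, by rw [Finset.mem_Icc]; omega, u + 1, by rw [Finset.mem_Icc]; omega, ?_, ?_⟩
    · simp only [show u + 2 - 1 = u + 1 from rfl, show u + 1 - 1 = u from rfl]
      apply overlap_helper _ _ _ _ _ (by linarith)
      have h1 : max (lam (u + 1)) (lam0 u) ≤ lam0 (u + 1) - Δ / 4 :=
        max_le (by linarith) (by linarith)
      have h2 : lam0 (u + 1) ≤ min (lam (u + 2)) (lam0 (u + 1)) :=
        le_min (by linarith) le_rfl
      linarith
    · simp only [show u + 2 - 1 = u + 1 from rfl]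
      apply overlap_helper _ _ _ _ _ (by linarith)
      have h1 : max (lam (u + 1)) (lam0 (u + 1)) ≤ lam0 (u + 1) :=
        max_le (by linarith) le_rfl
      have h2 : lam0 (u + 1) + Δ / 4 ≤ min (lam (u + 2)) (lam0 (u + 1 + 1)) :=
        le_min (by linarith) (by linarith)
      linarith
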